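/- arXiv:2301.06980 — 3 statements merged into one kernel-verified Lean document; each statement's English description precedes it below -/
import Mathlib

section
/- Let V be a finite-dimensional real vector space and F a finite collection of nonzero linear functionals on V, no two of which are collinear (i.e., no one is a scalar multiple of another). Then the functions 1/w for w ∈ F, defined on the open set where all w ∈ F are nonzero, are linearly independent over ℝ. -/
lemma aux_smul {V : Type*} [AddCommGroup V] [Module ℝ V] (w u : V →ₗ[ℝ] ℝ) (hw : w ≠ 0)
    (h : LinearMap.ker w ≤ LinearMap.ker u) : ∃ c : ℝ, u = c • w := by
  obtain ⟨z, hz⟩ : ∃ z, w z ≠ 0 := by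
    by_contra hc; push_neg at hc; exact hw (by ext v; simp [hc])
  refine ⟨u z / w z, ?_⟩
  ext v
  have hk : w (v - (w v / w z) • z) = 0 := by
    simp [map_sub, map_smul, smul_eq_mul, div_mul_cancel₀ _ hz]
  have := h hk
  simp only [LinearMap.mem_ker, map_sub, map_smul, smul_eq_mul, sub_eq_zero] at this
  simp only [LinearMap.smul_apply, smul_eq_mul]
  rw [this]; field_simp

lemma aux_pt {V : Type*} [AddCommGroup V] [Module ℝ V] [DecidableEq (V →ₗ[ℝ] ℝ)]
    (F : Finset (V →ₗ[ℝ] ℝ)) (w₀ : V →ₗ[ℝ] ℝ) (hw₀ : w₀ ∈ F) (hne : ∀ w ∈ F, w ≠ 0)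
    (hcol : ∀ w₁ ∈ F, ∀ w₂ ∈ F, w₁ ≠ w₂ → ∀ c : ℝ, w₁ ≠ c • w₂) :
    ∃ v : V, w₀ v = 0 ∧ ∀ u ∈ F, u ≠ w₀ → u v ≠ 0 := by
  by_contra hc
  push_neg at hc
  have hcov : ⋃ (u : (F.erase w₀)),
      ((LinearMap.ker (u.1.comp (LinearMap.ker w₀).subtype) : Subspace ℝ (LinearMap.ker w₀)) :
        Set (LinearMap.ker w₀)) = Set.univ := by
    ext x
    simp only [Set.mem_iUnion, Set.mem_univ, iff_true, SetLike.mem_coe, LinearMap.mem_ker,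
      LinearMap.comp_apply, Submodule.subtype_apply]
    obtain ⟨u, huF, hune, hux⟩ := hc x.1 x.2
    exact ⟨⟨u, Finset.mem_erase.2 ⟨hune, huF⟩⟩, hux⟩
  obtain ⟨u, hu⟩ := Subspace.exists_eq_top_of_iUnion_eq_univ hcov
  have hker : LinearMap.ker w₀ ≤ LinearMap.ker u.1 := by
    intro x hx
    have : (⟨x, hx⟩ : LinearMap.ker w₀) ∈
        LinearMap.ker (u.1.comp (LinearMap.ker w₀).subtype) := hu ▸ Submodule.mem_top
    simpa using this
  obtain ⟨hune, huF⟩ := Finset.mem_erase.1 u.2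
  obtain ⟨c, hcu⟩ := aux_smul w₀ u.1 (hne _ hw₀) hker
  exact hcol u.1 huF w₀ hw₀ hune c hcu

/-- Reciprocals of pairwise non-collinear nonzero linear functionals on a
finite-dimensional real vector space are linearly independent over ℝ,
as functions on the open set where all functionals are nonvanishing. -/
theorem stmt_0 (V : Type*) [AddCommGroup V] [Module ℝ V] [FiniteDimensional ℝ V]
    (F : Finset (V →ₗ[ℝ] ℝ))
    (hne : ∀ w ∈ F, w ≠ 0)
    (hcol : ∀ w₁ ∈ F, ∀ w₂ ∈ F, w₁ ≠ w₂ → ∀ c : ℝ, w₁ ≠ c • w₂) :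
    LinearIndependent ℝ
      (fun (w : F) => fun (v : {v : V // ∀ u ∈ F, u v ≠ 0}) => (w.1 v.1)⁻¹) := by
  classical
  rw [Fintype.linearIndependent_iff]
  intro g hg w₀
  obtain ⟨v, hv0, hvne⟩ := aux_pt F w₀.1 w₀.2 hne hcol
  obtain ⟨z, hz⟩ : ∃ z, w₀.1 z ≠ 0 := by
    by_contra hc; push_neg at hc; exact hne w₀.1 w₀.2 (by ext x; simp [hc])
  set l : Filter ℝ := nhdsWithin 0 {0}ᶜ with hl
  -- eventually all functionals are nonzero at v + t • z
  have hev : ∀ᶠ t in l, ∀ u ∈ F, u (v + t • z) ≠ 0 := by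
    have h1 : ∀ u : F, u.1 ≠ w₀.1 → ∀ᶠ t in l, u.1 (v + t • z) ≠ 0 := by
      intro u hu
      have hcont : ContinuousAt (fun t : ℝ => u.1 v + t * u.1 z) 0 := by fun_prop
      have : ∀ᶠ t in nhds (0:ℝ), u.1 v + t * u.1 z ≠ 0 := by
        have := hcont.eventually_ne (by simpa using hvne u.1 u.2 hu)
        simpa using this
      filter_upwards [nhdsWithin_le_nhds this] with t ht
      simpa [map_add, map_smul, smul_eq_mul] using ht
    have h2 : ∀ᶠ t in l, ∀ u : F, u.1 ≠ w₀.1 → u.1 (v + t • z) ≠ 0 :=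
      (Filter.eventually_all.2 fun u => Filter.eventually_imp_distrib_left.2 (h1 u))
    have h3 : ∀ᶠ t in l, w₀.1 (v + t • z) ≠ 0 := by
      filter_upwards [self_mem_nhdsWithin] with t ht
      simp only [map_add, map_smul, smul_eq_mul, hv0, zero_add]
      exact mul_ne_zero ht hz
    filter_upwards [h2, h3] with t h2 h3 u huF
    by_cases hu : u = w₀.1
    · rwa [hu]
    · exact h2 ⟨u, huF⟩ hu
  -- the key function of t
  set h : ℝ → ℝ := fun t => ∑ u : F, g u * (t * (u.1 v + t * u.1 z)⁻¹) with hh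
  have hzero : ∀ᶠ t in l, h t = 0 := by
    filter_upwards [hev] with t ht
    have hp : (∀ u ∈ F, u (v + t • z) ≠ 0) := ht
    have := congrFun hg ⟨v + t • z, hp⟩
    simp only [Finset.sum_apply, Pi.smul_apply, smul_eq_mul, Pi.zero_apply] at this
    have : t * ∑ u : F, g u * (u.1 (v + t • z))⁻¹ = 0 := by rw [this, mul_zero]
    rw [Finset.mul_sum] at this
    rw [hh]
    rw [← this]
    apply Finset.sum_congr rfl
    intro u _
    simp [map_add, map_smul, smul_eq_mul]; ring
  -- limit of h along l
  have hlim : Filter.Tendsto h l (nhds (g w₀ * (w₀.1 z)⁻¹)) := by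
    rw [hh]
    have hsplit : h = fun t => g w₀ * (t * (w₀.1 v + t * w₀.1 z)⁻¹)
        + ∑ u ∈ Finset.univ.erase w₀, g u * (t * (u.1 v + t * u.1 z)⁻¹) := by
      funext t
      rw [hh]
      exact (Finset.add_sum_erase _ (fun u => g u * (t * (u.1 v + t * u.1 z)⁻¹))
        (Finset.mem_univ w₀)).symm
    rw [← hh, hsplit]
    have hA : Filter.Tendsto (fun t : ℝ => g w₀ * (t * (w₀.1 v + t * w₀.1 z)⁻¹)) l
        (nhds (g w₀ * (w₀.1 z)⁻¹)) := by
      have heq : (fun t : ℝ => g w₀ * (t * (w₀.1 v + t * w₀.1 z)⁻¹))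
          =ᶠ[l] (fun _ => g w₀ * (w₀.1 z)⁻¹) := by
        filter_upwards [self_mem_nhdsWithin] with t ht
        have ht' : t ≠ 0 := ht
        rw [hv0, zero_add]
        field_simp
      exact Filter.Tendsto.congr' heq.symm tendsto_const_nhds
    have hB : Filter.Tendsto (fun t : ℝ => ∑ u ∈ Finset.univ.erase w₀,
        g u * (t * (u.1 v + t * u.1 z)⁻¹)) l (nhds 0) := by
      have hterm : ∀ u ∈ Finset.univ.erase w₀, Filter.Tendsto
          (fun t : ℝ => g u * (t * (u.1 v + t * u.1 z)⁻¹)) (nhds 0)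
          (nhds (g u * ((0:ℝ) * (u.1 v + 0 * u.1 z)⁻¹))) := by
        intro u hu
        have hune : u.1 ≠ w₀.1 := fun he =>
          (Finset.mem_erase.1 hu).1 (Subtype.ext he)
        have hnz : u.1 v + (0:ℝ) * u.1 z ≠ 0 := by
          simpa using hvne u.1 u.2 hune
        have hc : ContinuousAt (fun t : ℝ => g u * (t * (u.1 v + t * u.1 z)⁻¹)) 0 :=
          ContinuousAt.mul continuousAt_const
            (ContinuousAt.mul continuousAt_id
              (((continuousAt_const.add (continuousAt_id.mul continuousAt_const))).inv₀ hnz))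
        simpa using hc.tendsto
      have hsum := tendsto_finset_sum (Finset.univ.erase w₀) hterm
      simp only [mul_zero, zero_mul, Finset.sum_const_zero] at hsum
      exact hsum.mono_left nhdsWithin_le_nhds
    simpa using hA.add hB
  have : g w₀ * (w₀.1 z)⁻¹ = 0 :=
    tendsto_nhds_unique (hlim.congr' hzero) tendsto_const_nhds
  have hzinv : (w₀.1 z)⁻¹ ≠ 0 := inv_ne_zero hz
  exact (mul_eq_zero.1 this).resolve_right hzinv
end

section
/- Let V be a finite-dimensional real vector space, F a finite set of nonzero pairwise non-collinear linear functionals on V, and U a nonempty open subset of V on which every w ∈ F is nonvanishing. If a real linear combination ∑_{w∈F} c_w · (1/w) vanishes identically on U, then all coefficients c_w are zero. -/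
/-!
Clearing denominators, `∑ c_w / w = 0` on `U` becomes `P = 0` on `U` for the polynomial
`P = ∑_w c_w ∏_{w' ≠ w} w'`. Restricted to any line, `P` is a polynomial, hence analytic, in
one variable, so vanishing on the open set `U` forces `P = 0` on all of `V`. Now fix `w ∈ F`.
Since no other `w'` is a multiple of `w`, each `ker w'` meets `ker w` in a proper subspace, so
some `v ∈ ker w` avoids all of them. At `v` every summand of `P` except the `w`-th contains the
factor `w v = 0`, whence `0 = P v = c_w ∏_{w' ≠ w} w' v` and `c_w = 0`.
-/

open Finset Set Filter Topology

namespace Module.Dual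

variable {K V : Type*} [Field K] [AddCommGroup V] [Module K V]

theorem exists_smul_eq_of_ker_le_ker {w φ : V →ₗ[K] K}
    (h : LinearMap.ker w ≤ LinearMap.ker φ) : ∃ a : K, φ = a • w := by
  have := mem_span_of_iInf_ker_le_ker (L := fun _ : Unit ↦ w) (K := φ) (by simpa using h)
  rw [Set.range_const, Submodule.mem_span_singleton] at this
  obtain ⟨a, ha⟩ := this
  exact ⟨a, ha.symm⟩

variable [Infinite K]

theorem exists_forall_apply_ne_zero (s : Finset (V →ₗ[K] K)) (hs : ∀ φ ∈ s, φ ≠ 0) :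
    ∃ v : V, ∀ φ ∈ s, φ v ≠ 0 := by
  classical
  by_contra! h
  have hcover : ⋃ p ∈ s.image LinearMap.ker, (p : Set V) = univ :=
    eq_univ_of_forall fun v ↦ by
      obtain ⟨φ, hφ, hv⟩ := h v
      exact mem_biUnion (mem_image_of_mem _ hφ) hv
  obtain ⟨φ, hφ, hker⟩ := mem_image.1 (Subspace.top_mem_of_biUnion_eq_univ hcover)
  exact hs φ hφ (LinearMap.ker_eq_top.1 hker)

theorem exists_mem_ker_forall_apply_ne_zero (w : V →ₗ[K] K) (s : Finset (V →ₗ[K] K))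
    (hs : ∀ φ ∈ s, ∀ a : K, φ ≠ a • w) :
    ∃ v : V, w v = 0 ∧ ∀ φ ∈ s, φ v ≠ 0 := by
  classical
  obtain ⟨v, hv⟩ := exists_forall_apply_ne_zero (s.image (·.domRestrict (LinearMap.ker w)))
    (forall_mem_image.2 fun φ hφ h0 ↦ by
      obtain ⟨a, ha⟩ := exists_smul_eq_of_ker_le_ker (w := w) (φ := φ)
        fun x hx ↦ by simpa using LinearMap.congr_fun h0 ⟨x, hx⟩
      exact hs φ hφ a ha)
  exact ⟨v, v.2, fun φ hφ ↦ hv _ (mem_image_of_mem _ hφ)⟩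

end Module.Dual

namespace Finset

variable {ι : Type*} [DecidableEq ι] {s : Finset ι}

theorem sum_mul_prod_erase_eq_zero_of_sum_mul_inv_eq_zero {K : Type*} [Field K] {c f : ι → K}
    (hf : ∀ i ∈ s, f i ≠ 0) (h : ∑ i ∈ s, c i * (f i)⁻¹ = 0) :
    ∑ i ∈ s, c i * ∏ j ∈ s.erase i, f j = 0 := by
  have hterm : ∀ i ∈ s, c i * ∏ j ∈ s.erase i, f j = c i * (f i)⁻¹ * ∏ j ∈ s, f j :=
    fun i hi ↦ by
      rw [← mul_prod_erase s f hi, ← mul_assoc, mul_assoc (c i), inv_mul_cancel₀ (hf i hi),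
        mul_one]
  rw [sum_congr rfl hterm, ← sum_mul, h, zero_mul]

theorem sum_mul_prod_erase_of_eq_zero {R : Type*} [CommSemiring R] {c f : ι → R} {i₀ : ι}
    (hi₀ : i₀ ∈ s) (hf : f i₀ = 0) :
    ∑ i ∈ s, c i * ∏ j ∈ s.erase i, f j = c i₀ * ∏ j ∈ s.erase i₀, f j :=
  sum_eq_single_of_mem i₀ hi₀ fun i _ hi ↦ by
    rw [prod_eq_zero (mem_erase.2 ⟨Ne.symm hi, hi₀⟩) hf, mul_zero]

end Finset

section AlongLines

variable {V : Type*} [AddCommGroup V] [Module ℝ V]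

theorem eq_zero_of_analyticOnNhd_comp_line_of_eqOn_zero [TopologicalSpace V] [ContinuousAdd V]
    [ContinuousSMul ℝ V] {P : V → ℝ}
    (hP : ∀ x y : V, AnalyticOnNhd ℝ (fun t : ℝ ↦ P (x + t • y)) univ)
    {U : Set V} (hU : IsOpen U) (hUne : U.Nonempty) (hPU : EqOn P 0 U) : P = 0 := by
  obtain ⟨x₀, hx₀⟩ := hUne
  ext v
  set γ : ℝ → V := fun t ↦ x₀ + t • (v - x₀)
  have hγ : Tendsto γ (𝓝 0) (𝓝 x₀) := by
    have hcont : Continuous γ := by fun_prop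
    simpa [γ] using hcont.tendsto 0
  have hzero : P ∘ γ =ᶠ[𝓝 0] 0 := hγ.eventually (hU.mem_nhds hx₀) |>.mono fun t ht ↦ hPU ht
  have := (hP x₀ (v - x₀)).eqOn_zero_of_preconnected_of_eventuallyEq_zero isPreconnected_univ
    (mem_univ 0) hzero (mem_univ 1)
  simpa [γ] using this

theorem analyticOnNhd_sum_mul_prod_erase_comp_line [DecidableEq (V →ₗ[ℝ] ℝ)]
    (s : Finset (V →ₗ[ℝ] ℝ)) (c : (V →ₗ[ℝ] ℝ) → ℝ) (x y : V) :
    AnalyticOnNhd ℝ (fun t : ℝ ↦ ∑ w ∈ s, c w * ∏ w' ∈ s.erase w, w' (x + t • y)) univ :=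
  fun t _ ↦ by simp only [map_add, map_smul, smul_eq_mul]; fun_prop

end AlongLines

theorem stmt_1_general (V : Type*) [AddCommGroup V] [Module ℝ V] [TopologicalSpace V]
    [IsTopologicalAddGroup V] [ContinuousSMul ℝ V]
    (F : Finset (V →ₗ[ℝ] ℝ))
    (hcol : ∀ w₁ ∈ F, ∀ w₂ ∈ F, w₁ ≠ w₂ → ∀ c : ℝ, w₁ ≠ c • w₂)
    (U : Set V) (hU : U.Nonempty) (hUopen : IsOpen U)
    (hnv : ∀ w ∈ F, ∀ v ∈ U, w v ≠ 0)
    (c : (V →ₗ[ℝ] ℝ) → ℝ)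
    (hvanish : ∀ v ∈ U, ∑ w ∈ F, c w * (w v)⁻¹ = 0) :
    ∀ w ∈ F, c w = 0 := by
  classical
  intro w hw
  have hP : (fun x : V ↦ ∑ w ∈ F, c w * ∏ w' ∈ F.erase w, w' x) = 0 :=
    eq_zero_of_analyticOnNhd_comp_line_of_eqOn_zero
      (analyticOnNhd_sum_mul_prod_erase_comp_line F c) hUopen hU fun x hx ↦
        sum_mul_prod_erase_eq_zero_of_sum_mul_inv_eq_zero (fun w hw ↦ hnv w hw x hx)
          (hvanish x hx)
  obtain ⟨v, hwv, hv⟩ := Module.Dual.exists_mem_ker_forall_apply_ne_zero w (F.erase w)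
    fun w' hw' ↦ hcol w' (mem_of_mem_erase hw') w hw (ne_of_mem_erase hw')
  have hPv := congr_fun hP v
  rw [Pi.zero_apply, sum_mul_prod_erase_of_eq_zero (f := fun w' ↦ w' v) hw hwv] at hPv
  exact (mul_eq_zero.1 hPv).resolve_right (prod_ne_zero_iff.2 hv)

/-- If a real linear combination of reciprocals of nonzero, pairwise
non-collinear linear functionals vanishes identically on a nonempty open set
where all the functionals are nonvanishing, then all coefficients vanish. -/
theorem stmt_1 (V : Type*) [AddCommGroup V] [Module ℝ V] [TopologicalSpace V]
    [IsTopologicalAddGroup V] [ContinuousSMul ℝ V] [FiniteDimensional ℝ V]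
    (F : Finset (V →ₗ[ℝ] ℝ))
    (hne : ∀ w ∈ F, w ≠ 0)
    (hcol : ∀ w₁ ∈ F, ∀ w₂ ∈ F, w₁ ≠ w₂ → ∀ c : ℝ, w₁ ≠ c • w₂)
    (U : Set V) (hU : U.Nonempty) (hUopen : IsOpen U)
    (hnv : ∀ w ∈ F, ∀ v ∈ U, w v ≠ 0)
    (c : (V →ₗ[ℝ] ℝ) → ℝ)
    (hvanish : ∀ v ∈ U, ∑ w ∈ F, c w * (w v)⁻¹ = 0) :
    ∀ w ∈ F, c w = 0 :=
  stmt_1_general V F hcol U hU hUopen hnv c hvanish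
end

section
/- Kronecker's theorem: for v ∈ ℝⁿ, the closure of {tv mod ℤⁿ : t ∈ ℝ} in the torus ℝⁿ/ℤⁿ is a closed connected subgroup, namely the set of x ∈ ℝⁿ/ℤⁿ satisfying every integer linear relation ∑ mᵢ xᵢ ∈ ℤ that is satisfied by v (i.e., ∑ mᵢ vᵢ = 0 with mᵢ ∈ ℤ implies ∑ mᵢ xᵢ ∈ ℤ). -/
open Set Function Submodule
open scoped Real

namespace Kron

noncomputable section

variable {n : ℕ}

local instance : Fact ((0:ℝ) < 1) := ⟨one_pos⟩

abbrev 𝕋 (n : ℕ) := Fin n → AddCircle (1:ℝ)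

/-- the coordinate projection as continuous map -/
def proj (i : Fin n) : C(𝕋 n, AddCircle (1:ℝ)) := ⟨fun x => x i, continuous_apply i⟩

/-- multi-dimensional Fourier character -/
def chi (m : Fin n → ℤ) : C(𝕋 n, ℂ) := ∏ i, (fourier (m i)).comp (proj i)

theorem chi_apply (m : Fin n → ℤ) (x : 𝕋 n) : chi m x = ∏ i, fourier (m i) (x i) := by
  simp [chi, proj]

theorem chi_zero : chi (0 : Fin n → ℤ) = 1 := by
  ext x; simp [chi_apply, fourier_zero]

theorem chi_mul (m m' : Fin n → ℤ) : chi (m + m') = chi m * chi m' := by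
  ext x
  simp only [chi_apply, ContinuousMap.mul_apply, ← Finset.prod_mul_distrib]
  exact Finset.prod_congr rfl fun i _ => by simpa using (fourier_add (m := m i) (n := m' i))

theorem chi_star (m : Fin n → ℤ) : star (chi m) = chi (-m) := by
  ext x
  simp only [chi_apply, ContinuousMap.star_apply, star_prod]
  exact Finset.prod_congr rfl fun i _ => by
    simpa using (fourier_neg (n := m i) (x := x i)).symm

end

end Kron

namespace Kron
noncomputable section
variable {n : ℕ}
theorem chi_add_apply (m : Fin n → ℤ) (x y : 𝕋 n) :
    chi m (x + y) = chi m x * chi m y := by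
  simp only [chi_apply, ← Finset.prod_mul_distrib]
  refine Finset.prod_congr rfl fun i _ => ?_
  have : (x + y) i = x i + y i := rfl
  rw [this]
  simp only [fourier_apply, smul_add, AddCircle.toCircle_add]
  push_cast
  ring

/-- the star subalgebra generated by the characters -/
def chiAlg (n : ℕ) : StarSubalgebra ℂ C(𝕋 n, ℂ) where
  toSubalgebra := Algebra.adjoin ℂ (range (chi (n := n)))
  star_mem' := by
    show Algebra.adjoin ℂ (range (chi (n := n))) ≤ star (Algebra.adjoin ℂ (range (chi (n := n))))
    refine Algebra.adjoin_le ?_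
    rintro - ⟨m, rfl⟩
    rw [SetLike.mem_coe, Subalgebra.mem_star_iff]
    exact Algebra.subset_adjoin ⟨-m, (chi_star m).symm⟩

theorem chiAlg_coe (n : ℕ) :
    Subalgebra.toSubmodule (chiAlg n).toSubalgebra = span ℂ (range (chi (n := n))) := by
  apply Algebra.adjoin_eq_span_of_subset
  refine Subset.trans ?_ Submodule.subset_span
  intro x hx
  refine Submonoid.closure_induction (fun _ => id) ⟨0, chi_zero⟩ ?_ hx
  rintro - - - - ⟨m, rfl⟩ ⟨m', rfl⟩
  exact ⟨m + m', chi_mul m m'⟩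

theorem chiAlg_separatesPoints (n : ℕ) : (chiAlg n).SeparatesPoints := by
  intro x y hxy
  obtain ⟨i, hi⟩ : ∃ i, x i ≠ y i := by
    by_contra h
    push_neg at h
    exact hxy (funext h)
  refine ⟨_, ⟨chi (Pi.single i 1), Algebra.subset_adjoin ⟨_, rfl⟩, rfl⟩, ?_⟩
  show chi (Pi.single i 1) x ≠ chi (Pi.single i 1) y
  rw [chi_apply, chi_apply]
  rw [Finset.prod_eq_single i (fun j _ hj => by simp [Pi.single_eq_of_ne hj, fourier_zero])
    (fun h => absurd (Finset.mem_univ i) h),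
    Finset.prod_eq_single i (fun j _ hj => by simp [Pi.single_eq_of_ne hj, fourier_zero])
    (fun h => absurd (Finset.mem_univ i) h)]
  simp only [Pi.single_eq_same, fourier_one]
  intro h
  rw [Circle.coe_inj] at h
  exact hi (AddCircle.injective_toCircle one_ne_zero h)

theorem span_chi_dense (n : ℕ) :
    (span ℂ (range (chi (n := n)))).topologicalClosure = ⊤ := by
  rw [← chiAlg_coe]
  exact congr_arg (Subalgebra.toSubmodule <| StarSubalgebra.toSubalgebra ·)
    (ContinuousMap.starSubalgebra_topologicalClosure_eq_top_of_separatesPoints (chiAlg n)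
      (chiAlg_separatesPoints n))

end
end Kron

namespace Kron
noncomputable section
variable {n : ℕ}
open Complex

/-- the line in the torus -/
def L (v : Fin n → ℝ) (t : ℝ) : 𝕋 n := fun i => ((t * v i : ℝ) : AddCircle (1:ℝ))

theorem chi_L (v : Fin n → ℝ) (m : Fin n → ℤ) (t : ℝ) :
    chi m (L v t) = Complex.exp (((2 * π * ∑ i, (m i : ℝ) * v i) * t : ℝ) * Complex.I) := by
  rw [chi_apply]
  have : ∀ i, fourier (m i) ((L v t) i) =
      Complex.exp (((2 * π * ((m i : ℝ) * v i)) * t : ℝ) * Complex.I) := by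
    intro i
    rw [show (L v t) i = ((t * v i : ℝ) : AddCircle (1:ℝ)) from rfl, fourier_coe_apply]
    push_cast
    ring_nf
  simp_rw [this, ← Complex.exp_sum]
  congr 1
  push_cast
  rw [← Finset.sum_mul, ← Finset.sum_mul, Finset.mul_sum]

theorem chi_eq_one (m : Fin n → ℤ) (x : 𝕋 n) (h : (∑ i, m i • x i) = 0) :
    chi m x = 1 := by
  have key : ∀ s : Finset (Fin n),
      (∏ i ∈ s, fourier (m i) (x i)) = AddCircle.toCircle (∑ i ∈ s, m i • x i) := by
    intro s
    induction s using Finset.cons_induction with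
    | empty => simp [fourier_zero']
    | cons a s ha ih =>
        rw [Finset.prod_cons, Finset.sum_cons, ih, AddCircle.toCircle_add]
        simp [fourier_apply]
  rw [chi_apply, key, h]
  simp [fourier_zero']

end
end Kron

namespace Kron
noncomputable section
variable {n : ℕ}
open Complex Filter intervalIntegral
open scoped Topology

theorem tendsto_avg_exp (a : ℝ) :
    Tendsto (fun T : ℝ => (T : ℂ)⁻¹ * ∫ t in (0:ℝ)..T, Complex.exp ((a * t : ℝ) * Complex.I))
      atTop (𝓝 (if a = 0 then 1 else 0)) := by
  by_cases ha : a = 0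
  · simp only [ha, if_pos rfl]
    refine Tendsto.congr' ?_ tendsto_const_nhds
    filter_upwards [eventually_gt_atTop (0:ℝ)] with T hT
    have : ∀ t : ℝ, Complex.exp (((0:ℝ) * t : ℝ) * Complex.I) = 1 := by
      intro t; norm_num
    simp only [this, intervalIntegral.integral_const, smul_eq_mul, mul_one, sub_zero]
    field_simp
    simp [Complex.real_smul, hT.ne']
  · simp only [if_neg ha]
    have key : ∀ T : ℝ, (∫ t in (0:ℝ)..T, Complex.exp ((a * t : ℝ) * Complex.I))
        = (Complex.exp ((a : ℂ) * Complex.I * T) - 1) / ((a : ℂ) * Complex.I) := by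
      intro T
      have hc : (a : ℂ) * Complex.I ≠ 0 := by
        simp [Complex.ofReal_ne_zero.mpr ha, Complex.I_ne_zero]
      have := integral_exp_mul_complex (a := (0:ℝ)) (b := T) hc
      simp only [Complex.ofReal_zero, mul_zero, Complex.exp_zero] at this
      rw [← this]
      congr 1
      ext t
      push_cast
      ring_nf
    refine squeeze_zero_norm' (a := fun T : ℝ => (2 / |a|) * T⁻¹) ?_ ?_
    · filter_upwards [eventually_gt_atTop (0:ℝ)] with T hT
      rw [key]
      have h1 : ‖Complex.exp ((a : ℂ) * Complex.I * T) - 1‖ ≤ 2 := by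
        calc ‖Complex.exp ((a : ℂ) * Complex.I * T) - 1‖
            ≤ ‖Complex.exp ((a : ℂ) * Complex.I * T)‖ + ‖(1:ℂ)‖ := norm_sub_le _ _
          _ ≤ 2 := by
              have : (a : ℂ) * Complex.I * T = ((a * T : ℝ) : ℂ) * Complex.I := by
                push_cast; ring
              rw [this, Complex.norm_exp_ofReal_mul_I]
              norm_num
      rw [norm_mul, norm_div]
      have h2 : ‖(a:ℂ) * Complex.I‖ = |a| := by
        simp [Complex.norm_real]
      have h3 : ‖(T:ℂ)⁻¹‖ = T⁻¹ := by
        rw [norm_inv, Complex.norm_real, Real.norm_eq_abs, abs_of_pos hT]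
      rw [h2, h3]
      calc T⁻¹ * (‖Complex.exp ((a : ℂ) * Complex.I * T) - 1‖ / |a|)
          ≤ T⁻¹ * (2 / |a|) := by
            gcongr
        _ = (2 / |a|) * T⁻¹ := by ring
    · have : Tendsto (fun T : ℝ => (2 / |a|) * T⁻¹) atTop (𝓝 ((2 / |a|) * 0)) :=
        (tendsto_inv_atTop_zero).const_mul _
      simpa using this

end
end Kron

namespace Kron
noncomputable section
variable {n : ℕ}
open Complex Filter intervalIntegral
open scoped Topology

theorem continuous_L (v : Fin n → ℝ) : Continuous (L v) :=
  continuous_pi fun i => continuous_quotient_mk'.comp (continuous_id.mul continuous_const)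

theorem tendsto_avg_P (v : Fin n → ℝ) (s : Finset (Fin n → ℤ)) (c : (Fin n → ℤ) → ℂ) (y : 𝕋 n) :
    Tendsto (fun T : ℝ => (T:ℂ)⁻¹ * ∫ t in (0:ℝ)..T, ∑ m ∈ s, c m * chi m (y + L v t)) atTop
      (𝓝 (∑ m ∈ s.filter (fun m => (∑ i, (m i:ℝ) * v i) = 0), c m * chi m y)) := by
  have hrw : ∀ m (t:ℝ), c m * chi m (y + L v t)
      = (c m * chi m y) * Complex.exp (((2 * π * ∑ i, (m i : ℝ) * v i) * t : ℝ) * Complex.I) := by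
    intro m t; rw [chi_add_apply, chi_L]; ring
  have hint : ∀ (m : Fin n → ℤ) (T : ℝ),
      IntervalIntegrable (fun t => c m * chi m (y + L v t)) MeasureTheory.volume 0 T := by
    intro m T
    exact (Continuous.mul continuous_const ((chi m).continuous.comp
      (continuous_const.add (continuous_L v)))).intervalIntegrable _ _
  have heq : ∀ T : ℝ, ((T:ℂ)⁻¹ * ∫ t in (0:ℝ)..T, ∑ m ∈ s, c m * chi m (y + L v t))
      = ∑ m ∈ s, (c m * chi m y) *
          ((T:ℂ)⁻¹ * ∫ t in (0:ℝ)..T,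
            Complex.exp (((2 * π * ∑ i, (m i : ℝ) * v i) * t : ℝ) * Complex.I)) := by
    intro T
    rw [intervalIntegral.integral_finset_sum (fun m _ => hint m T), Finset.mul_sum]
    refine Finset.sum_congr rfl fun m _ => ?_
    simp_rw [hrw m]
    rw [intervalIntegral.integral_const_mul]
    ring
  simp_rw [heq]
  have hlim := tendsto_finset_sum s fun (m : Fin n → ℤ) (_ : m ∈ s) =>
    (tendsto_avg_exp (2 * π * ∑ i, (m i : ℝ) * v i)).const_mul (c m * chi m y)
  have hval : (∑ m ∈ s.filter (fun m => (∑ i, (m i:ℝ) * v i) = 0), c m * chi m y)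
      = ∑ m ∈ s, (c m * chi m y) *
          (if (2 * π * ∑ i, (m i : ℝ) * v i) = 0 then 1 else 0) := by
    rw [Finset.sum_filter]
    refine Finset.sum_congr rfl fun m _ => ?_
    have h2π : (2 * π * ∑ i, (m i : ℝ) * v i) = 0 ↔ (∑ i, (m i : ℝ) * v i) = 0 := by
      constructor
      · intro h
        rcases mul_eq_zero.mp h with h' | h'
        · exact absurd h' (by positivity)
        · exact h'
      · intro h; rw [h, mul_zero]
    rw [if_congr h2π.symm rfl rfl]
    split_ifs <;> simp
  rw [hval]
  exact hlim

end
end Kron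

namespace Kron
noncomputable section
variable {n : ℕ}
open Complex Filter intervalIntegral
open scoped Topology

/-- the one-parameter subgroup as a hom -/
def phi (v : Fin n → ℝ) : ℝ →+ 𝕋 n where
  toFun := L v
  map_zero' := by
    funext i
    show ((0 * v i : ℝ) : AddCircle (1:ℝ)) = 0
    rw [zero_mul]; rfl
  map_add' s t := by
    funext i
    show ((((s + t) * v i : ℝ)) : AddCircle (1:ℝ)) = ((s * v i : ℝ) : AddCircle (1:ℝ)) + ((t * v i : ℝ) : AddCircle (1:ℝ))
    rw [add_mul]
    rfl

/-- the closed subgroup -/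
def Hgrp (v : Fin n → ℝ) : AddSubgroup (𝕋 n) := (phi v).range.topologicalClosure

theorem Hgrp_coe (v : Fin n → ℝ) : (Hgrp v : Set (𝕋 n)) = closure (range (L v)) := by
  rw [Hgrp, AddSubgroup.topologicalClosure_coe, AddMonoidHom.coe_range]
  rfl

theorem chi_apply_zero (m : Fin n → ℤ) : chi m (0 : 𝕋 n) = 1 := by
  rw [chi_apply]
  exact Finset.prod_eq_one fun i _ => fourier_eval_zero (m i)

theorem hard (v : Fin n → ℝ) :
    {x : 𝕋 n | ∀ m : Fin n → ℤ, (∑ i, (m i : ℝ) * v i) = 0 → (∑ i, m i • x i) = 0}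
      ⊆ closure (range (L v)) := by
  intro x hx
  by_contra hxH
  -- H and x + H are disjoint compact sets
  set H : Set (𝕋 n) := closure (range (L v)) with hH
  have hHc : IsClosed H := isClosed_closure
  have hxHset : IsClosed ((x + ·) '' H) := by
    have : IsCompact H := hHc.isCompact
    exact ((this.image (continuous_const.add continuous_id)).isClosed)
  have hdisj : Disjoint H ((x + ·) '' H) := by
    rw [Set.disjoint_left]
    rintro z hz ⟨h, hh, rfl⟩
    apply hxH
    have hz' : x + h ∈ Hgrp v := by rw [← SetLike.mem_coe, Hgrp_coe]; exact hz
    have hh' : h ∈ Hgrp v := by rw [← SetLike.mem_coe, Hgrp_coe]; exact hh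
    have hmem : x + h - h ∈ Hgrp v := sub_mem hz' hh'
    rw [add_sub_cancel_right] at hmem
    rw [hH, ← Hgrp_coe]
    exact hmem
  -- Urysohn
  obtain ⟨f, hf0, hf1, hf01⟩ := exists_continuous_zero_one_of_isClosed hHc hxHset hdisj
  set fC : C(𝕋 n, ℂ) := ⟨fun y => (f y : ℂ), by continuity⟩ with hfC
  -- approximation by a trigonometric polynomial
  have hfC_mem : fC ∈ closure ((Submodule.span ℂ (range (chi (n := n)))) : Set C(𝕋 n, ℂ)) := by
    have := span_chi_dense n
    have : fC ∈ (Submodule.span ℂ (range (chi (n := n)))).topologicalClosure := by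
      rw [this]; trivial
    exact this
  rw [Metric.mem_closure_iff] at hfC_mem
  obtain ⟨P, hPmem, hPdist⟩ := hfC_mem (1/3) (by norm_num)
  rw [SetLike.mem_coe, Finsupp.mem_span_range_iff_exists_finsupp] at hPmem
  obtain ⟨cf, hcf⟩ := hPmem
  set s : Finset (Fin n → ℤ) := cf.support with hs
  set c : (Fin n → ℤ) → ℂ := fun m => cf m with hc
  have hPapp : ∀ y : 𝕋 n, P y = ∑ m ∈ s, c m * chi m y := by
    intro y
    rw [← hcf]
    simp [Finsupp.sum, s, c]
  set C : ℝ := dist fC P with hC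
  have hCbound : ∀ y : 𝕋 n, dist (P y) (fC y) ≤ C := by
    intro y
    rw [dist_comm]
    exact ContinuousMap.dist_apply_le_dist y
  have hClt : C < 1/3 := hPdist
  -- the common limit value
  set S : ℂ := ∑ m ∈ s.filter (fun m => (∑ i, (m i:ℝ) * v i) = 0), c m with hSdef
  -- bound ‖S‖ ≤ C
  have hbound1 : ‖S‖ ≤ C := by
    have hlim := tendsto_avg_P v s c 0
    have hval : (∑ m ∈ s.filter (fun m => (∑ i, (m i:ℝ) * v i) = 0), c m * chi m (0 : 𝕋 n)) = S := by
      refine Finset.sum_congr rfl fun m _ => ?_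
      rw [chi_apply_zero, mul_one]
    rw [hval] at hlim
    refine le_of_tendsto hlim.norm ?_
    filter_upwards [eventually_gt_atTop (0:ℝ)] with T hT
    have hnorm_int : ‖∫ t in (0:ℝ)..T, ∑ m ∈ s, c m * chi m ((0 : 𝕋 n) + L v t)‖ ≤ C * |T - 0| := by
      apply intervalIntegral.norm_integral_le_of_norm_le_const
      intro t _
      have h1 : (∑ m ∈ s, c m * chi m ((0 : 𝕋 n) + L v t)) = P (L v t) := by
        rw [hPapp, zero_add]
      rw [h1]
      have h2 : fC (L v t) = 0 := by
        have : L v t ∈ H := subset_closure ⟨t, rfl⟩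
        have := hf0 this
        simp only [hfC, ContinuousMap.coe_mk]
        rw [show f (L v t) = 0 from this]
        norm_num
      calc ‖P (L v t)‖ = dist (P (L v t)) (fC (L v t)) := by rw [h2, dist_zero_right]
        _ ≤ C := hCbound _
    rw [norm_mul, norm_inv]
    have : ‖(T:ℂ)‖ = T := by rw [Complex.norm_real, Real.norm_eq_abs, abs_of_pos hT]
    rw [this]
    calc T⁻¹ * ‖∫ t in (0:ℝ)..T, ∑ m ∈ s, c m * chi m ((0 : 𝕋 n) + L v t)‖
        ≤ T⁻¹ * (C * |T - 0|) := by
          apply mul_le_mul_of_nonneg_left hnorm_int (inv_nonneg.mpr hT.le)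
      _ = C := by
          rw [sub_zero, abs_of_pos hT]
          field_simp
  -- bound ‖S - 1‖ ≤ C
  have hbound2 : ‖S - 1‖ ≤ C := by
    have hlim := tendsto_avg_P v s c x
    have hval : (∑ m ∈ s.filter (fun m => (∑ i, (m i:ℝ) * v i) = 0), c m * chi m x) = S := by
      refine Finset.sum_congr rfl fun m hm => ?_
      rw [Finset.mem_filter] at hm
      rw [chi_eq_one m x (hx m hm.2), mul_one]
    rw [hval] at hlim
    have hlim' : Tendsto (fun T : ℝ =>
        ((T:ℂ)⁻¹ * ∫ t in (0:ℝ)..T, ∑ m ∈ s, c m * chi m (x + L v t)) - 1) atTop (𝓝 (S - 1)) :=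
      hlim.sub tendsto_const_nhds
    refine le_of_tendsto hlim'.norm ?_
    filter_upwards [eventually_gt_atTop (0:ℝ)] with T hT
    have hint : IntervalIntegrable (fun t => ∑ m ∈ s, c m * chi m (x + L v t))
        MeasureTheory.volume 0 T := by
      apply Continuous.intervalIntegrable
      exact continuous_finset_sum _ fun m _ => continuous_const.mul
        ((chi m).continuous.comp (continuous_const.add (continuous_L v)))
    have key : ((T:ℂ)⁻¹ * ∫ t in (0:ℝ)..T, ∑ m ∈ s, c m * chi m (x + L v t)) - 1
        = (T:ℂ)⁻¹ * ∫ t in (0:ℝ)..T, ((∑ m ∈ s, c m * chi m (x + L v t)) - 1) := by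
      rw [intervalIntegral.integral_sub hint (intervalIntegrable_const)]
      rw [intervalIntegral.integral_const]
      rw [mul_sub]
      congr 1
      rw [sub_zero]
      rw [show ((T:ℝ) • (1:ℂ)) = (T:ℂ) by simp]
      rw [inv_mul_cancel₀ (by exact_mod_cast hT.ne' : (T:ℂ) ≠ 0)]
    rw [key]
    have hnorm_int : ‖∫ t in (0:ℝ)..T, ((∑ m ∈ s, c m * chi m (x + L v t)) - 1)‖ ≤ C * |T - 0| := by
      apply intervalIntegral.norm_integral_le_of_norm_le_const
      intro t _
      have h1 : (∑ m ∈ s, c m * chi m (x + L v t)) = P (x + L v t) := (hPapp _).symm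
      rw [h1]
      have h2 : fC (x + L v t) = 1 := by
        have hmem : x + L v t ∈ (x + ·) '' H := ⟨L v t, subset_closure ⟨t, rfl⟩, rfl⟩
        have := hf1 hmem
        simp only [hfC, ContinuousMap.coe_mk]
        rw [show f (x + L v t) = 1 from this]
        norm_num
      calc ‖P (x + L v t) - 1‖ = dist (P (x + L v t)) (fC (x + L v t)) := by
            rw [h2, dist_eq_norm]
        _ ≤ C := hCbound _
    rw [norm_mul, norm_inv]
    have : ‖(T:ℂ)‖ = T := by rw [Complex.norm_real, Real.norm_eq_abs, abs_of_pos hT]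
    rw [this]
    calc T⁻¹ * ‖∫ t in (0:ℝ)..T, ((∑ m ∈ s, c m * chi m (x + L v t)) - 1)‖
        ≤ T⁻¹ * (C * |T - 0|) := by
          apply mul_le_mul_of_nonneg_left hnorm_int (inv_nonneg.mpr hT.le)
      _ = C := by
          rw [sub_zero, abs_of_pos hT]
          field_simp
  -- contradiction
  have hfinal : (1:ℝ) ≤ ‖S‖ + ‖S - 1‖ := by
    have h1 : (1:ℂ) = S - (S - 1) := by ring
    calc (1:ℝ) = ‖(1:ℂ)‖ := by simp
      _ = ‖S - (S - 1)‖ := by rw [← h1]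
      _ ≤ ‖S‖ + ‖S - 1‖ := norm_sub_le _ _
  linarith

end
end Kron

namespace Kron
noncomputable section
variable {n : ℕ}
theorem easy (v : Fin n → ℝ) :
    closure (range (L v)) ⊆
      {x : 𝕋 n | ∀ m : Fin n → ℤ, (∑ i, (m i : ℝ) * v i) = 0 → (∑ i, m i • x i) = 0} := by
  have hclosed : IsClosed {x : 𝕋 n | ∀ m : Fin n → ℤ,
      (∑ i, (m i : ℝ) * v i) = 0 → (∑ i, m i • x i) = 0} := by
    have heq : {x : 𝕋 n | ∀ m : Fin n → ℤ, (∑ i, (m i : ℝ) * v i) = 0 → (∑ i, m i • x i) = 0}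
        = ⋂ m : Fin n → ℤ, {x : 𝕋 n | (∑ i, (m i : ℝ) * v i) = 0 → (∑ i, m i • x i) = 0} := by
      ext y; simp [Set.mem_iInter, Set.mem_setOf_eq]
    rw [heq]
    refine isClosed_iInter fun m => ?_
    by_cases hm : (∑ i, (m i : ℝ) * v i) = 0
    · have h2 : {x : 𝕋 n | (∑ i, (m i : ℝ) * v i) = 0 → (∑ i, m i • x i) = 0}
          = {x : 𝕋 n | (∑ i, m i • x i) = 0} := by
        ext y; simp [hm]
      rw [h2]
      exact isClosed_eq (continuous_finset_sum _ fun i _ =>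
        (continuous_zsmul (m i)).comp (continuous_apply i)) continuous_const
    · have h2 : {x : 𝕋 n | (∑ i, (m i : ℝ) * v i) = 0 → (∑ i, m i • x i) = 0} = Set.univ := by
        ext y; simp [hm]
      rw [h2]; exact isClosed_univ
  refine closure_minimal ?_ hclosed
  rintro - ⟨t, rfl⟩ m hm
  have key : (∑ i, m i • (L v t) i)
      = ((t * ∑ i, (m i : ℝ) * v i : ℝ) : AddCircle (1:ℝ)) := by
    have h1 : ∀ i, m i • (L v t) i
        = (((m i : ℝ) * (t * v i) : ℝ) : AddCircle (1:ℝ)) := by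
      intro i
      show m i • ((((t * v i : ℝ)) : AddCircle (1:ℝ))) = _
      rw [show (((m i : ℝ) * (t * v i) : ℝ)) = m i • (t * v i : ℝ) by rw [zsmul_eq_mul]]
      exact (map_zsmul (QuotientAddGroup.mk' (AddSubgroup.zmultiples (1:ℝ))) _ _).symm
    simp_rw [h1]
    rw [show ((t * ∑ i, (m i : ℝ) * v i : ℝ) : AddCircle (1:ℝ))
        = QuotientAddGroup.mk' (AddSubgroup.zmultiples (1:ℝ)) (t * ∑ i, (m i : ℝ) * v i) from rfl,
      show (∑ i, ((((m i : ℝ) * (t * v i) : ℝ)) : AddCircle (1:ℝ)))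
        = QuotientAddGroup.mk' (AddSubgroup.zmultiples (1:ℝ)) (∑ i, (m i : ℝ) * (t * v i)) from
        (map_sum (QuotientAddGroup.mk' (AddSubgroup.zmultiples (1:ℝ)))
          (fun i => (m i : ℝ) * (t * v i)) Finset.univ).symm]
    congr 1
    rw [Finset.mul_sum]
    exact Finset.sum_congr rfl fun i _ => by ring
  show (∑ i, m i • (L v t) i) = 0
  rw [key, hm, mul_zero]
  rfl

end
end Kron



/-- Kronecker's theorem: the closure of the line `{t·v mod ℤⁿ}` in the torus
`ℝⁿ/ℤⁿ` is a closed connected subgroup, namely the set of points `x`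
satisfying every integer linear relation satisfied by `v`. -/
theorem stmt_9 (n : ℕ) (v : Fin n → ℝ) :
    closure (Set.range fun t : ℝ =>
        fun i : Fin n => ((t * v i : ℝ) : AddCircle (1 : ℝ)))
      = {x : Fin n → AddCircle (1 : ℝ) |
          ∀ m : Fin n → ℤ, (∑ i, (m i : ℝ) * v i) = 0 → (∑ i, m i • x i) = 0} ∧
    IsClosed (closure (Set.range fun t : ℝ =>
        fun i : Fin n => ((t * v i : ℝ) : AddCircle (1 : ℝ)))) ∧
    IsConnected (closure (Set.range fun t : ℝ =>
        fun i : Fin n => ((t * v i : ℝ) : AddCircle (1 : ℝ)))) ∧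
    ∃ H : AddSubgroup (Fin n → AddCircle (1 : ℝ)),
      (H : Set (Fin n → AddCircle (1 : ℝ)))
        = closure (Set.range fun t : ℝ =>
            fun i : Fin n => ((t * v i : ℝ) : AddCircle (1 : ℝ))) := by
  haveI : Fact ((0:ℝ) < 1) := ⟨one_pos⟩
  have hrange : (Set.range fun t : ℝ => fun i : Fin n => ((t * v i : ℝ) : AddCircle (1 : ℝ)))
      = Set.range (Kron.L v) := rfl
  refine ⟨?_, isClosed_closure, ?_, ?_⟩
  · rw [hrange]
    exact subset_antisymm (Kron.easy v) (Kron.hard v)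
  · rw [hrange]
    exact (isConnected_range (Kron.continuous_L v)).closure
  · exact ⟨Kron.Hgrp v, by rw [Kron.Hgrp_coe, hrange]⟩
end
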